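/- arXiv:2301.10578 — 2 statements merged into one kernel-verified Lean document; each statement's English description precedes it below -/
import Mathlib

section
/- Let H be a minimally 2-connected simple graph and let (P_1, …, P_h) be a greedy open ear decomposition of H. Then for every 2 ≤ i ≤ h, the two endpoints s_i and t_i of the ear P_i are not adjacent in the graph H_{i-1} = P_1 ∪ ⋯ ∪ P_{i-1}. -/
open SimpleGraph

/-- `G` is `k`-connected: it has more than `k` vertices and deleting any set of
fewer than `k` vertices leaves a connected graph. -/
def KConnected {V : Type*} (k : ℕ) (G : SimpleGraph V) : Prop :=
  k < Nat.card V ∧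
    ∀ S : Set V, S.Finite → S.ncard < k → (G.induce Sᶜ).Connected

/-- `H` is minimally 2-connected: it is 2-connected, but deleting any edge
destroys 2-connectedness. -/
def MinimallyTwoConnected {V : Type*} (H : SimpleGraph V) : Prop :=
  KConnected 2 H ∧ ∀ e ∈ H.edgeSet, ¬ KConnected 2 (H.deleteEdges {e})

/-- The subgraph `H_k = P₁ ∪ ⋯ ∪ P_k` formed by the first `k` ears
(the ears with indices `0, …, k-1`). -/
def earPrefix {V : Type*} {H : SimpleGraph V} {h : ℕ} {s t : Fin (h + 1) → V}
    (ear : (i : Fin (h + 1)) → H.Walk (s i) (t i)) (k : ℕ) : H.Subgraph :=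
  ⨆ i : Fin (h + 1), if (i : ℕ) < k then (ear i).toSubgraph else ⊥

/-- An open ear decomposition `(P₁, …, P_{h+1})` of `H` (indexed here by
`Fin (h+1)`): the ears partition the edge set of `H`, the first ear is a cycle,
and every later ear is a path with two distinct endpoints meeting the union of
the previous ears exactly in its endpoints. -/
structure OpenEarDecomp {V : Type*} (H : SimpleGraph V) (h : ℕ) where
  /-- first endpoints of the ears -/
  s : Fin (h + 1) → V
  /-- second endpoints of the ears -/
  t : Fin (h + 1) → V
  /-- the ears, as walks in `H` -/
  ear : (i : Fin (h + 1)) → H.Walk (s i) (t i)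
  /-- the first ear is closed -/
  first_closed : s 0 = t 0
  /-- the first ear is a cycle -/
  first_cycle : ((ear 0).copy rfl first_closed.symm).IsCycle
  /-- every later ear is a path -/
  ears_path : ∀ i : Fin (h + 1), 0 < (i : ℕ) → (ear i).IsPath
  /-- every later ear has two distinct endpoints -/
  ends_ne : ∀ i : Fin (h + 1), 0 < (i : ℕ) → s i ≠ t i
  /-- the endpoints of a later ear lie in the union of the previous ears -/
  ends_mem : ∀ i : Fin (h + 1), 0 < (i : ℕ) →
    s i ∈ (earPrefix ear i).verts ∧ t i ∈ (earPrefix ear i).verts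
  /-- a later ear meets the union of the previous ears only in its endpoints -/
  internal_disjoint : ∀ i : Fin (h + 1), 0 < (i : ℕ) →
    ∀ x ∈ (ear i).support, x ∈ (earPrefix ear i).verts → x = s i ∨ x = t i
  /-- distinct ears are edge-disjoint -/
  edge_disjoint : ∀ i j : Fin (h + 1), i ≠ j →
    ∀ e ∈ (ear i).edges, e ∉ (ear j).edges
  /-- the ears cover all edges of `H` -/
  edges_cover : ∀ e ∈ H.edgeSet, ∃ i : Fin (h + 1), e ∈ (ear i).edges

/-- An ear decomposition is *greedy* if at every step the longest possible ear
is added: the first ear is a longest cycle of `H`, and no admissible ear is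
longer than the ear actually added. -/
def OpenEarDecomp.Greedy {V : Type*} {H : SimpleGraph V} {h : ℕ}
    (D : OpenEarDecomp H h) : Prop :=
  (∀ (v : V) (w : H.Walk v v), w.IsCycle → w.length ≤ (D.ear 0).length) ∧
  (∀ i : Fin (h + 1), 0 < (i : ℕ) →
    ∀ (u v : V) (q : H.Walk u v), q.IsPath → u ≠ v →
      u ∈ (earPrefix D.ear i).verts → v ∈ (earPrefix D.ear i).verts →
      (∀ x ∈ q.support, x ∈ (earPrefix D.ear i).verts → x = u ∨ x = v) →
      (∀ e ∈ q.edges, e ∉ (earPrefix D.ear i).edgeSet) →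
      q.length ≤ (D.ear i).length)

/-!
Suppose `s_i t_i` were an edge of an earlier ear `P_j`. It is not an edge of `P_i`, so `P_i` has
length at least two. Replacing the edge `s_i t_i` of `P_j` by `P_i` gives a cycle longer than
`P_1` (if `j = 1`), or a path longer than `P_j` that was already an admissible ear when `P_j`
was chosen: its new vertices avoid `H_{j-1} ⊆ H_{i-1}` and its new edges lie outside `H_{i-1}`.
Either way the greedy choice is violated.
-/

namespace SimpleGraph.Walk

variable {V : Type*} {G : SimpleGraph V} {u v w a b : V}

theorem isPath_append_iff {p : G.Walk u v} {q : G.Walk v w} :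
    (p.append q).IsPath ↔ p.IsPath ∧ q.IsPath ∧ ∀ x ∈ p.support, x ∈ q.support → x = v := by
  have hv := p.end_mem_support
  rw [isPath_def, isPath_def, isPath_def, support_append, ← q.cons_tail_support,
    List.nodup_cons, List.nodup_append]
  grind

theorem IsCycle.append_comm {p : G.Walk u v} {q : G.Walk v u} (h : (p.append q).IsCycle) :
    (q.append p).IsCycle := by
  rw [isCycle_def, isTrail_def, edges_append, tail_support_append] at h ⊢
  refine ⟨List.perm_append_comm.nodup_iff.1 h.1, ?_, List.perm_append_comm.nodup_iff.1 h.2.2⟩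
  grind [nil_append_iff, eq_nil_iff_nil]

theorem mk_mem_edges_of_length_le_one (p : G.Walk u v) (huv : u ≠ v) (hp : p.length ≤ 1) :
    s(u, v) ∈ p.edges := by
  cases p with
  | nil => exact absurd rfl huv
  | cons _ q => cases q with
    | nil => simp
    | cons _ _ => simp at hp

theorem IsPath.replace_edge {ru : G.Walk u a} {rv : G.Walk b v} {hab : G.Adj a b}
    (hw : ((ru.append hab.toWalk).append rv).IsPath) {P : G.Walk a b} (hP : P.IsPath)
    (hPw : ∀ x ∈ P.support, x ∈ ((ru.append hab.toWalk).append rv).support → x = a ∨ x = b) :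
    ((ru.append P).append rv).IsPath := by
  simp only [isPath_append_iff, mem_support_append_iff, Adj.support_toWalk] at hw hPw ⊢
  have := hab.ne
  grind

theorem IsPath.start_notMem_support_tail {p : G.Walk u v} (hp : p.IsPath) :
    u ∉ p.support.tail :=
  (List.nodup_cons.1 (p.cons_tail_support ▸ hp.support_nodup)).1

theorem IsCycle.replace_edge {ru : G.Walk u a} {rv : G.Walk b u} {hab : G.Adj a b}
    (hc : ((ru.append hab.toWalk).append rv).IsCycle) {P : G.Walk a b} (hP : P.IsPath)
    (hlen : 1 < P.length)
    (hPc : ∀ x ∈ P.support, x ∈ ((ru.append hab.toWalk).append rv).support → x = a ∨ x = b) :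
    (P.append (rv.append ru)).IsCycle := by
  have hq : (rv.append ru).IsPath := by
    rw [← append_assoc] at hc
    have hrot := hc.append_comm
    rw [← append_assoc] at hrot
    exact hrot.isPath_of_append_right (by simp)
  refine hP.isCycle_append hq (fun x hxP hxq => ?_) (Or.inl hlen)
  have hxc : x ∈ ((ru.append hab.toWalk).append rv).support := by
    have := List.mem_of_mem_tail hxq
    simp only [mem_support_append_iff] at this ⊢
    tauto
  rcases hPc x (List.mem_of_mem_tail hxP) hxc with rfl | rfl
  · exact hP.start_notMem_support_tail hxP
  · exact hq.start_notMem_support_tail hxq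

end SimpleGraph.Walk

section EarDecomposition

variable {V : Type*} {H : SimpleGraph V} {h : ℕ} {s t : Fin (h + 1) → V}
  (ear : (i : Fin (h + 1)) → H.Walk (s i) (t i))

theorem mem_verts_earPrefix {k : ℕ} {x : V} :
    x ∈ (earPrefix ear k).verts ↔ ∃ j : Fin (h + 1), (j : ℕ) < k ∧ x ∈ (ear j).support := by
  simp [earPrefix, Subgraph.verts_iSup, apply_ite]

theorem mem_edgeSet_earPrefix {k : ℕ} {e : Sym2 V} :
    e ∈ (earPrefix ear k).edgeSet ↔ ∃ j : Fin (h + 1), (j : ℕ) < k ∧ e ∈ (ear j).edges := by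
  simp [earPrefix, Subgraph.edgeSet_iSup, apply_ite]

theorem earPrefix_mono : Monotone (earPrefix ear) :=
  fun _ _ hkl => iSup_mono fun j => by split_ifs <;> first | rfl | exact bot_le | omega

namespace OpenEarDecomp

variable (D : OpenEarDecomp H h)

theorem edges_ear_notMem_earPrefix (i : Fin (h + 1)) :
    ∀ e ∈ (D.ear i).edges, e ∉ (earPrefix D.ear i).edgeSet := by
  intro e he hpre
  obtain ⟨j, hji, hej⟩ := (mem_edgeSet_earPrefix D.ear).1 hpre
  exact D.edge_disjoint i j (fun hij => by omega) e he hej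

variable {D}

theorem Greedy.detour_length_le_one_of_isSubwalk (hD : D.Greedy) {j : Fin (h + 1)} {k : ℕ} (hjk : (j : ℕ) < k)
    {a b : V} {hab : H.Adj a b} (hsub : hab.toWalk.IsSubwalk (D.ear j))
    {P : H.Walk a b} (hP : P.IsPath)
    (hPv : ∀ x ∈ P.support, x ∈ (earPrefix D.ear k).verts → x = a ∨ x = b)
    (hPe : ∀ e ∈ P.edges, e ∉ (earPrefix D.ear k).edgeSet) :
    P.length ≤ 1 := by
  obtain ⟨ru, rv, hsplit⟩ := hsub
  have hPj : ∀ x ∈ P.support, x ∈ (D.ear j).support → x = a ∨ x = b :=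
    fun x hx hxj => hPv x hx ((mem_verts_earPrefix D.ear).2 ⟨j, hjk, hxj⟩)
  have hlen_j := congrArg Walk.length hsplit
  simp only [Walk.length_append, Adj.length_toWalk] at hlen_j
  rcases Nat.eq_zero_or_pos j with hj | hj
  · obtain rfl : j = 0 := Fin.ext hj
    by_contra! hlen
    have hc : ((ru.append hab.toWalk).append (rv.copy rfl D.first_closed.symm)).IsCycle := by
      have := D.first_cycle
      rwa [hsplit, ← Walk.append_copy_copy _ _ rfl rfl, Walk.copy_rfl_rfl] at this
    have := hD.1 _ _ (hc.replace_edge hP hlen (by simpa [hsplit] using hPj))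
    simp only [Walk.length_append, Walk.length_copy] at this
    omega
  · have hq := (hsplit ▸ D.ears_path j hj).replace_edge hP (hsplit ▸ hPj)
    have hmono := earPrefix_mono D.ear hjk.le
    have := hD.2 j hj _ _ _ hq (D.ends_ne j hj) (D.ends_mem j hj).1 (D.ends_mem j hj).2 ?_ ?_
    · simp only [Walk.length_append] at this
      omega
    · intro x hx hxpre
      refine D.internal_disjoint j hj x ?_ hxpre
      rw [hsplit]
      simp only [Walk.mem_support_append_iff, Adj.support_toWalk] at hx ⊢
      rcases hx with (hx | hx) | hx
      · exact Or.inl (Or.inl hx)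
      · rcases hPv x hx (hmono.1 hxpre) with rfl | rfl <;> simp
      · exact Or.inr hx
    · intro e he hepre
      simp only [Walk.edges_append, List.mem_append] at he
      rcases he with (he | he) | he
      · exact D.edges_ear_notMem_earPrefix j e (by simp [hsplit, he]) hepre
      · exact hPe e he (Subgraph.edgeSet_mono hmono hepre)
      · exact D.edges_ear_notMem_earPrefix j e (by simp [hsplit, he]) hepre

theorem Greedy.detour_length_le_one (hD : D.Greedy) {j : Fin (h + 1)} {k : ℕ}
    (hjk : (j : ℕ) < k) {a b : V} (he : s(a, b) ∈ (D.ear j).edges)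
    {P : H.Walk a b} (hP : P.IsPath)
    (hPv : ∀ x ∈ P.support, x ∈ (earPrefix D.ear k).verts → x = a ∨ x = b)
    (hPe : ∀ e ∈ P.edges, e ∉ (earPrefix D.ear k).edgeSet) :
    P.length ≤ 1 := by
  rcases (Walk.isSubwalk_toWalk_iff_mem_edges ((D.ear j).adj_of_mem_edges he)).2 he with
    hsub | hsub
  · exact hD.detour_length_le_one_of_isSubwalk hjk hsub hP hPv hPe
  · simpa using hD.detour_length_le_one_of_isSubwalk hjk hsub hP.reverse
      (by simpa [or_comm] using hPv) (by simpa using hPe)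

end OpenEarDecomp

end EarDecomposition

theorem greedy_ear_endpoints_not_adjacent_general {V : Type*} (H : SimpleGraph V)
    {h : ℕ} (D : OpenEarDecomp H h) (hD : D.Greedy) :
    ∀ i : Fin (h + 1), 0 < (i : ℕ) →
      ¬ (earPrefix D.ear i).Adj (D.s i) (D.t i) := by
  intro i hi hadj
  obtain ⟨j, hji, hj⟩ := (mem_edgeSet_earPrefix D.ear).1 (Subgraph.mem_edgeSet.2 hadj)
  have hlen := hD.detour_length_le_one hji hj (D.ears_path i hi)
    (D.internal_disjoint i hi) (D.edges_ear_notMem_earPrefix i)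
  exact D.edges_ear_notMem_earPrefix i _
    ((D.ear i).mk_mem_edges_of_length_le_one (D.ends_ne i hi) hlen) hadj

/-- In a greedy open ear decomposition of a minimally 2-connected graph, the
endpoints `s_i` and `t_i` of each ear `P_i` (`i ≥ 2`) are not adjacent in the
graph `H_{i-1} = P₁ ∪ ⋯ ∪ P_{i-1}`. -/
theorem greedy_ear_endpoints_not_adjacent {V : Type*} (H : SimpleGraph V)
    (hmin : MinimallyTwoConnected H) {h : ℕ}
    (D : OpenEarDecomp H h) (hD : D.Greedy) :
    ∀ i : Fin (h + 1), 0 < (i : ℕ) →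
      ¬ (earPrefix D.ear i).Adj (D.s i) (D.t i) :=
  greedy_ear_endpoints_not_adjacent_general H D hD
end

section
/- Let H be a minimally 2-connected simple graph and let (P_1, …, P_h) be a greedy open ear decomposition of H. Let P_i and P_j be ears with j < i such that P_i has exactly two edges, P_j has exactly three edges, and an endpoint s of P_i is an internal vertex of P_j. Then the other endpoint t of P_i is the endpoint of P_j that is not adjacent to s in the graph H_j = P_1 ∪ ⋯ ∪ P_j. -/
/-!
The middle vertex `m` of `P_i = x m y` is new at step `i`. Starting from `y`, walk back along
the ears between `P_j` and `P_i`, always leaving an ear through an end other than `x`, until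
`H_j ∪ P_j` is reached; prefixed by `x m` this is a path `Q` with at least two edges from `x` to
`H_j ∪ P_j` that meets `H_j ∪ P_j` only in its ends. If `P_j = b₀ b₁ b₂ b₃` is a later ear and
`x = b₁`, rerouting `P_j` through `Q` gives an ear of length at least four at the step of `P_j`,
contradicting greediness, unless `Q = x m b₃`. If `P_j` is the first ear, it is a triangle and
`Q` closes a cycle of length at least four, contradicting its maximality.
-/

open SimpleGraph

namespace SimpleGraph

variable {V : Type*} {G : SimpleGraph V}

namespace Walk

structure IsEarOn {u v : V} (q : G.Walk u v) (A : Set V) : Prop where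
  isPath : q.IsPath
  ne : u ≠ v
  start_mem : u ∈ A
  end_mem : v ∈ A
  eq_or_eq_of_mem : ∀ x ∈ q.support, x ∈ A → x = u ∨ x = v

theorem isEarOn_cons {A : Set V} {a u v : V} (hau : G.Adj a u) {q : G.Walk u v}
    (hq : q.IsPath) (ha : a ∈ A) (hv : v ∈ A) (hav : a ≠ v)
    (hqA : ∀ x ∈ q.support, x ∈ A → x = v) : (cons hau q).IsEarOn A where
  isPath := hq.cons fun haq => hav (hqA a haq ha)
  ne := hav
  start_mem := ha
  end_mem := hv
  eq_or_eq_of_mem x hx hxA := by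
    rcases List.mem_cons.1 (support_cons hau q ▸ hx) with rfl | hx
    · exact Or.inl rfl
    · exact Or.inr (hqA x hx hxA)

theorem IsPath.append_of_support_inter {u v w : V} {p : G.Walk u v} {q : G.Walk v w}
    (hp : p.IsPath) (hq : q.IsPath) (hpq : ∀ x ∈ p.support, x ∈ q.support → x = v) :
    (p.append q).IsPath := by
  rw [isPath_def, support_append]
  have hq' := q.cons_tail_support ▸ hq.support_nodup
  refine hp.support_nodup.append (List.nodup_cons.1 hq').2 fun x hxp hxq => ?_
  obtain rfl := hpq x hxp (List.mem_of_mem_tail hxq)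
  exact (List.nodup_cons.1 hq').1 hxq

theorem IsPath.exists_isPath_to_endpoint {a b v : V} {p : G.Walk a b} (hp : p.IsPath)
    (hv : v ∈ p.support) (hva : v ≠ a) (hvb : v ≠ b) (hab : a ≠ b) (c : V) :
    ∃ z, (z = a ∨ z = b) ∧ z ≠ c ∧ ∃ P : G.Walk v z, P.IsPath ∧ P.support ⊆ p.support ∧
      ∀ x ∈ P.support, x = a ∨ x = b → x = z := by
  classical
  by_cases hac : a = c
  · have hv' : v ∈ p.reverse.support := by simpa using hv
    refine ⟨b, Or.inr rfl, fun hbc => hab (hac.trans hbc.symm), (p.reverse.takeUntil v hv').reverse,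
      (hp.reverse.takeUntil hv').reverse, fun x hx => ?_, fun x hx hx' => ?_⟩
    · simpa using p.reverse.support_takeUntil_subset_support hv' (by simpa using hx)
    · rcases hx' with rfl | rfl
      · exact absurd (by simpa using hx) (endpoint_notMem_support_takeUntil hp.reverse hv' hva.symm)
      · rfl
  · refine ⟨a, Or.inl rfl, hac, (p.takeUntil v hv).reverse, (hp.takeUntil hv).reverse,
      fun x hx => p.support_takeUntil_subset_support hv (by simpa using hx), fun x hx hx' => ?_⟩
    rcases hx' with rfl | rfl
    · rfl
    · exact absurd (by simpa using hx) (endpoint_notMem_support_takeUntil hp hv hvb.symm)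

theorem IsPath.isCycle_cons_concat {a b w : V} {q : G.Walk a b} (hq : q.IsPath) (hab : a ≠ b)
    (hwq : w ∉ q.support) (hwa : G.Adj w a) (hbw : G.Adj b w) :
    (cons hwa (q.concat hbw)).IsCycle := by
  refine (cons_isCycle_iff _ _).2 ⟨hq.concat hwq hbw, fun hmem => ?_⟩
  rw [edges_concat, List.concat_eq_append, List.mem_append, List.mem_singleton] at hmem
  rcases hmem with hmem | hmem
  · exact hwq (q.fst_mem_support_of_mem_edges hmem)
  · rcases Sym2.eq_iff.1 hmem with ⟨rfl, -⟩ | ⟨-, rfl⟩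
    · exact hbw.ne rfl
    · exact hab rfl

theorem exists_eq_cons_cons_nil_of_length_eq_two {a b : V} {p : G.Walk a b}
    (hp : p.length = 2) :
    ∃ (c : V) (h₁ : G.Adj a c) (h₂ : G.Adj c b), p = cons h₁ (cons h₂ nil) := by
  match p, hp with
  | cons h₁ (cons h₂ nil), _ => exact ⟨_, h₁, h₂, rfl⟩

theorem exists_eq_cons_cons_cons_nil_of_length_eq_three {a b : V} {p : G.Walk a b}
    (hp : p.length = 3) : ∃ (c d : V) (h₁ : G.Adj a c) (h₂ : G.Adj c d) (h₃ : G.Adj d b),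
      p = cons h₁ (cons h₂ (cons h₃ nil)) := by
  match p, hp with
  | cons h₁ (cons h₂ (cons h₃ nil)), _ => exact ⟨_, _, h₁, h₂, h₃, rfl⟩

end Walk

theorem exists_adj_adj_of_mem_triangle {a b c x z : V} (hab : G.Adj a b) (hbc : G.Adj b c)
    (hca : G.Adj c a) (hx : x ∈ ({a, b, c} : Set V)) (hz : z ∈ ({a, b, c} : Set V))
    (hxz : x ≠ z) : ∃ w ∈ ({a, b, c} : Set V), G.Adj w x ∧ G.Adj z w := by
  simp only [Set.mem_insert_iff, Set.mem_singleton_iff] at hx hz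
  rcases hx with rfl | rfl | rfl <;> rcases hz with rfl | rfl | rfl
  all_goals first
    | exact absurd rfl hxz
    | exact ⟨a, by simp, by assumption, by assumption⟩
    | exact ⟨b, by simp, by assumption, by assumption⟩
    | exact ⟨c, by simp, by assumption, by assumption⟩
    | exact ⟨a, by simp, by simp_all [G.adj_comm]⟩
    | exact ⟨b, by simp, by simp_all [G.adj_comm]⟩
    | exact ⟨c, by simp, by simp_all [G.adj_comm]⟩

/-- Rerouting the path `b₀b₁b₂b₃` through `Q` yields an `A`-ear of length `Q.length + 2`, or of
length `Q.length + 1` when `Q` ends in `b₃`. -/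
theorem Walk.IsEarOn.eq_and_length_eq_two_of_three_path {A : Set V}
    (hA : ∀ (u v : V) (q : G.Walk u v), q.IsEarOn A → q.length ≤ 3)
    {b₀ b₁ b₂ b₃ z : V} (h₀₁ : G.Adj b₀ b₁) (h₁₂ : G.Adj b₁ b₂) (h₂₃ : G.Adj b₂ b₃)
    (hb₀ : b₀ ∈ A) (hb₁ : b₁ ∉ A) (hb₂ : b₂ ∉ A) (hb₃ : b₃ ∈ A) (hb₀₃ : b₀ ≠ b₃)
    {Q : G.Walk b₁ z} (hQ : Q.IsEarOn (insert b₁ (insert b₂ A))) (hQ₂ : 2 ≤ Q.length) :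
    z = b₃ ∧ Q.length = 2 := by
  have hQA : ∀ x ∈ Q.support, x ∈ A → x = z := fun x hx hxA =>
    (hQ.eq_or_eq_of_mem x hx (by simp [hxA])).resolve_left (by rintro rfl; exact hb₁ hxA)
  rcases hQ.end_mem with rfl | rfl | hzA
  · exact absurd rfl hQ.ne
  · have hb₃Q : b₃ ∉ Q.support := fun h => hb₂ (hQA b₃ h hb₃ ▸ hb₃)
    have := hA _ _ _ (Walk.isEarOn_cons h₀₁ (hQ.isPath.concat hb₃Q h₂₃) hb₀ hb₃ hb₀₃
      fun x hx hxA => by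
        rw [Walk.support_concat, List.mem_append, List.mem_singleton] at hx
        exact hx.elim (fun hx => absurd (hQA x hx hxA ▸ hxA) hb₂) id)
    simp only [Walk.length_cons, Walk.length_concat] at this
    omega
  · by_cases hz₃ : z = b₃
    · subst hz₃
      have := hA _ _ _ (Walk.isEarOn_cons h₀₁ hQ.isPath hb₀ hb₃ hb₀₃ hQA)
      simp only [Walk.length_cons] at this
      exact ⟨rfl, by omega⟩
    · have hb₂Q : b₂ ∉ Q.support := fun h =>
        (hQ.eq_or_eq_of_mem b₂ h (by simp)).elim h₁₂.ne' fun h' => hb₂ (h' ▸ hzA)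
      have := hA _ _ _ (Walk.isEarOn_cons h₂₃.symm (hQ.isPath.cons hb₂Q (h := h₁₂.symm)) hb₃
        hzA (Ne.symm hz₃) fun x hx hxA => by
          rcases List.mem_cons.1 (Walk.support_cons _ _ ▸ hx) with rfl | hx
          · exact absurd hxA hb₂
          · exact hQA x hx hxA)
      simp only [Walk.length_cons] at this
      omega

end SimpleGraph

section earPrefix

variable {V : Type*} {H : SimpleGraph V} {h : ℕ} {s t : Fin (h + 1) → V}
  (ear : (i : Fin (h + 1)) → H.Walk (s i) (t i))

theorem mem_earPrefix_verts_iff {v : V} {k : ℕ} :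
    v ∈ (earPrefix ear k).verts ↔ ∃ r : Fin (h + 1), (r : ℕ) < k ∧ v ∈ (ear r).support := by
  simp only [earPrefix, Subgraph.verts_iSup, Set.mem_iUnion]
  refine exists_congr fun r => ?_
  split_ifs with hr <;> simp [hr]

theorem earPrefix_adj_iff {u v : V} {k : ℕ} :
    (earPrefix ear k).Adj u v ↔ ∃ r : Fin (h + 1), (r : ℕ) < k ∧ s(u, v) ∈ (ear r).edges := by
  simp only [earPrefix, Subgraph.iSup_adj]
  refine exists_congr fun r => ?_
  split_ifs with hr
  · rw [← Subgraph.mem_edgeSet, Walk.mem_edges_toSubgraph]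
    simp [hr]
  · simp [hr]

theorem earPrefix_verts_mono {k l : ℕ} (hkl : k ≤ l) :
    (earPrefix ear k).verts ⊆ (earPrefix ear l).verts := fun _ hv =>
  let ⟨r, hr, hv⟩ := (mem_earPrefix_verts_iff ear).1 hv
  (mem_earPrefix_verts_iff ear).2 ⟨r, hr.trans_le hkl, hv⟩

theorem earPrefix_succ_verts (k : Fin (h + 1)) :
    (earPrefix ear (k + 1)).verts = (earPrefix ear k).verts ∪ {v | v ∈ (ear k).support} := by
  ext v
  simp only [mem_earPrefix_verts_iff, Set.mem_union, Set.mem_ofPred_eq, Nat.lt_succ_iff_lt_or_eq,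
    Fin.val_inj, or_and_right, exists_or, exists_eq_left]

theorem earPrefix_succ_adj_iff (k : Fin (h + 1)) {u v : V} :
    (earPrefix ear (k + 1)).Adj u v ↔ (earPrefix ear k).Adj u v ∨ s(u, v) ∈ (ear k).edges := by
  simp only [earPrefix_adj_iff, Nat.lt_succ_iff_lt_or_eq, Fin.val_inj, or_and_right, exists_or,
    exists_eq_left]

end earPrefix

namespace OpenEarDecomp

variable {V : Type*} {H : SimpleGraph V} {h : ℕ} (D : OpenEarDecomp H h)

theorem exists_isPath_to_earPrefix {c : ℕ} (hc : 1 ≤ c) (k : ℕ) {v : V} (avoid : V)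
    (hv : v ∈ (earPrefix D.ear k).verts) (hva : v ≠ avoid) :
    ∃ (z : V) (W : H.Walk v z), W.IsPath ∧ z ∈ (earPrefix D.ear c).verts ∧ z ≠ avoid ∧
      (∀ u ∈ W.support, u ∈ (earPrefix D.ear c).verts → u = z) ∧
      ∀ u ∈ W.support, u ∈ (earPrefix D.ear k).verts := by
  induction k using Nat.strong_induction_on generalizing v with
  | _ k IH =>
  by_cases hvc : v ∈ (earPrefix D.ear c).verts
  · exact ⟨v, .nil, .nil, hvc, hva, by simp, by simpa⟩
  obtain ⟨r, hrk, hvr⟩ := (mem_earPrefix_verts_iff D.ear).1 hv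
  have hcr : c ≤ r := not_lt.1 fun hrc => hvc ((mem_earPrefix_verts_iff D.ear).2 ⟨r, hrc, hvr⟩)
  have hr : 0 < (r : ℕ) := by omega
  have hrk' := earPrefix_verts_mono D.ear hrk.le
  by_cases hvr' : v ∈ (earPrefix D.ear r).verts
  · obtain ⟨z, W, hW, hzc, hza, hWc, hWr⟩ := IH r hrk hvr' hva
    exact ⟨z, W, hW, hzc, hza, hWc, fun u hu => hrk' (hWr u hu)⟩
  -- `v` is an inner vertex of ear `r`: walk along it to an end other than `avoid`, then recurse
  obtain ⟨z₀, hz₀, hz₀a, P, hP, hPr, hPends⟩ := (D.ears_path r hr).exists_isPath_to_endpoint hvr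
    (fun h => hvr' (h ▸ (D.ends_mem r hr).1)) (fun h => hvr' (h ▸ (D.ends_mem r hr).2))
    (D.ends_ne r hr) avoid
  have hz₀r : z₀ ∈ (earPrefix D.ear r).verts := by
    rcases hz₀ with rfl | rfl
    exacts [(D.ends_mem r hr).1, (D.ends_mem r hr).2]
  have hPH : ∀ u ∈ P.support, u ∈ (earPrefix D.ear r).verts → u = z₀ := fun u hu hur =>
    hPends u hu (D.internal_disjoint r hr u (hPr hu) hur)
  obtain ⟨z, W, hW, hzc, hza, hWc, hWr⟩ := IH r hrk hz₀r hz₀a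
  refine ⟨z, P.append W, hP.append_of_support_inter hW fun u hu hu' => hPH u hu (hWr u hu'),
    hzc, hza, fun u hu huc => ?_, fun u hu => ?_⟩
  · rcases (Walk.mem_support_append_iff _ _).1 hu with hu | hu
    · obtain rfl := hPH u hu (earPrefix_verts_mono D.ear hcr huc)
      exact hWc u W.start_mem_support huc
    · exact hWc u hu huc
  · rcases (Walk.mem_support_append_iff _ _).1 hu with hu | hu
    · exact (mem_earPrefix_verts_iff D.ear).2 ⟨r, hrk, hPr hu⟩
    · exact hrk' (hWr u hu)

theorem exists_adj_adj_of_length_eq_two {i : Fin (h + 1)} (hi : 0 < (i : ℕ))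
    (hi₂ : (D.ear i).length = 2) :
    ∃ m, H.Adj (D.s i) m ∧ H.Adj m (D.t i) ∧ m ∉ (earPrefix D.ear i).verts := by
  obtain ⟨m, h₁, h₂, hw⟩ := Walk.exists_eq_cons_cons_nil_of_length_eq_two hi₂
  have hnodup := (D.ears_path i hi).support_nodup
  simp only [hw, Walk.support_cons, Walk.support_nil, List.nodup_cons, List.mem_cons,
    List.not_mem_nil, or_false, not_or] at hnodup
  refine ⟨m, h₁, h₂, fun hm => ?_⟩
  rcases D.internal_disjoint i hi m (by simp [hw]) hm with h | h
  exacts [hnodup.1.1 h.symm, hnodup.2.1 h]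

section Greedy

variable {D}

theorem Greedy.length_le (hD : D.Greedy) {k : Fin (h + 1)}
    (hk : 0 < (k : ℕ)) {u v : V} {q : H.Walk u v} (hq : q.IsEarOn (earPrefix D.ear k).verts) :
    q.length ≤ (D.ear k).length := by
  by_cases hq₁ : q.length = 1
  · exact hq₁ ▸ Nat.one_le_iff_ne_zero.2 fun h₀ => D.ends_ne k hk (Walk.eq_of_length_eq_zero h₀)
  refine hD.2 k hk u v q hq.isPath hq.ne hq.start_mem hq.end_mem hq.eq_or_eq_of_mem
    fun e he heH => ?_
  induction e using Sym2.ind with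
  | _ a b =>
  -- both ends of an edge of `H_k` on `q` are ends of `q`, so `q` is that single edge
  have hab : (earPrefix D.ear k).Adj a b := heH
  have ha := hq.eq_or_eq_of_mem a (q.fst_mem_support_of_mem_edges he) hab.fst_mem
  have hb := hq.eq_or_eq_of_mem b (q.snd_mem_support_of_mem_edges he) hab.snd_mem
  have huv : s(a, b) = s(u, v) := by
    rcases ha with rfl | rfl <;> rcases hb with rfl | rfl
    all_goals first | exact absurd rfl hab.ne | rfl | exact Sym2.eq_swap
  exact hq₁ (hq.isPath.length_eq_one_of_mem_edges (huv ▸ he))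

theorem Greedy.eq_and_not_adj_of_length_eq_three (hD : D.Greedy) {j : Fin (h + 1)}
    (hj : 0 < (j : ℕ)) (hj₃ : (D.ear j).length = 3) {x z : V} (hx : x ∈ (D.ear j).support)
    (hxs : x ≠ D.s j) (hxt : x ≠ D.t j) {Q : H.Walk x z}
    (hQ : Q.IsEarOn (earPrefix D.ear (j + 1)).verts) (hQ₂ : 2 ≤ Q.length) :
    Q.length = 2 ∧ (z = D.s j ∨ z = D.t j) ∧ ¬ (earPrefix D.ear (j + 1)).Adj x z := by
  obtain ⟨a₁, a₂, h₁, h₂, h₃, hw⟩ := Walk.exists_eq_cons_cons_cons_nil_of_length_eq_three hj₃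
  have hsupp : (D.ear j).support = [D.s j, a₁, a₂, D.t j] := by simp [hw]
  have hnodup := (D.ears_path j hj).support_nodup
  simp only [hsupp, List.nodup_cons, List.mem_cons, List.not_mem_nil, or_false, not_or]
    at hnodup
  obtain ⟨⟨hs₁, hs₂, hst⟩, ⟨h₁₂, h₁t⟩, h₂t, -⟩ := hnodup
  obtain ⟨hs, ht⟩ := D.ends_mem j hj
  have ha₁ : a₁ ∉ (earPrefix D.ear j).verts := fun h =>
    (D.internal_disjoint j hj a₁ (by simp [hsupp]) h).elim (hs₁ ·.symm) h₁t
  have ha₂ : a₂ ∉ (earPrefix D.ear j).verts := fun h =>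
    (D.internal_disjoint j hj a₂ (by simp [hsupp]) h).elim (hs₂ ·.symm) h₂t
  have hB : (earPrefix D.ear (j + 1)).verts = insert a₁ (insert a₂ (earPrefix D.ear j).verts) := by
    ext v
    rw [earPrefix_succ_verts, hsupp]
    simp only [Set.mem_union, Set.mem_insert_iff, Set.mem_ofPred_eq, List.mem_cons,
      List.not_mem_nil, or_false]
    constructor
    · rintro (h | rfl | rfl | rfl | rfl) <;> simp_all
    · rintro (rfl | rfl | h) <;> simp_all
  have hA : ∀ (u v : V) (q : H.Walk u v), q.IsEarOn (earPrefix D.ear j).verts → q.length ≤ 3 :=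
    fun _ _ _ hq => hj₃ ▸ hD.length_le hj hq
  have hnadj : ∀ {a b : V}, a ∉ (earPrefix D.ear j).verts → (earPrefix D.ear (j + 1)).Adj a b →
      s(a, b) ∈ [s(D.s j, a₁), s(a₁, a₂), s(a₂, D.t j)] := fun ha hab => by
    rw [earPrefix_succ_adj_iff] at hab
    simpa [hw] using hab.resolve_left fun hab => ha hab.fst_mem
  rw [hB] at hQ
  simp only [hsupp, List.mem_cons, List.not_mem_nil, or_false] at hx
  rcases hx with rfl | rfl | rfl | rfl
  · exact absurd rfl hxs
  · obtain ⟨rfl, hlen⟩ := hQ.eq_and_length_eq_two_of_three_path hA h₁ h₂ h₃ hs ha₁ ha₂ ht hst hQ₂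
    refine ⟨hlen, Or.inr rfl, fun hadj => ?_⟩
    have := hnadj ha₁ hadj
    simp only [List.mem_cons, List.not_mem_nil, or_false, Sym2.eq_iff] at this
    grind
  · rw [Set.insert_comm] at hQ
    obtain ⟨rfl, hlen⟩ := hQ.eq_and_length_eq_two_of_three_path hA h₃.symm h₂.symm h₁.symm ht ha₂
      ha₁ hs (Ne.symm hst) hQ₂
    refine ⟨hlen, Or.inl rfl, fun hadj => ?_⟩
    have := hnadj ha₂ hadj
    simp only [List.mem_cons, List.not_mem_nil, or_false, Sym2.eq_iff] at this
    grind
  · exact absurd rfl hxt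

theorem Greedy.not_isEarOn_of_length_eq_three (hD : D.Greedy) (h₀₃ : (D.ear 0).length = 3)
    {x z : V} {Q : H.Walk x z} (hQ₂ : 2 ≤ Q.length) :
    ¬ Q.IsEarOn (earPrefix D.ear 1).verts := by
  intro hQ
  obtain ⟨a₁, a₂, h₁, h₂, h₃, hw⟩ := Walk.exists_eq_cons_cons_cons_nil_of_length_eq_three h₀₃
  have htri : (earPrefix D.ear 1).verts = {D.s 0, a₁, a₂} := by
    ext v
    simp only [mem_earPrefix_verts_iff, Nat.lt_one_iff, Fin.val_eq_zero_iff, exists_eq_left, hw]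
    simp only [Walk.support_cons, Walk.support_nil, List.mem_cons, List.not_mem_nil, or_false,
      Set.mem_insert_iff, Set.mem_singleton_iff, ← D.first_closed]
    tauto
  obtain ⟨w, hwH, hwx, hzw⟩ := exists_adj_adj_of_mem_triangle h₁ h₂
    (D.first_closed ▸ h₃) (htri ▸ hQ.start_mem) (htri ▸ hQ.end_mem) hQ.ne
  have hwQ : w ∉ Q.support := fun h =>
    (hQ.eq_or_eq_of_mem w h (htri ▸ hwH)).elim hwx.ne hzw.ne'
  have := hD.1 w _ (hQ.isPath.isCycle_cons_concat hQ.ne hwQ hwx hzw)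
  simp only [Walk.length_cons, Walk.length_concat] at this
  omega

end Greedy

end OpenEarDecomp

theorem greedy_two_ear_on_three_ear_general {V : Type*}
    (H : SimpleGraph V) {h : ℕ}
    (D : OpenEarDecomp H h) (hD : D.Greedy)
    (i j : Fin (h + 1)) (hji : (j : ℕ) < (i : ℕ))
    (hi2 : (D.ear i).length = 2) (hj3 : (D.ear j).length = 3)
    (x y : V)
    (hxy : (x = D.s i ∧ y = D.t i) ∨ (x = D.t i ∧ y = D.s i))
    (hxint : x ∈ (D.ear j).support ∧ x ≠ D.s j ∧ x ≠ D.t j) :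
    (y = D.s j ∨ y = D.t j) ∧
      ¬ (earPrefix D.ear ((j : ℕ) + 1)).Adj x y := by
  obtain ⟨hx, hxs, hxt⟩ := hxint
  have hi : 0 < (i : ℕ) := by omega
  obtain ⟨m, hxm, hmy, hm, hy, hyx⟩ : ∃ m, H.Adj x m ∧ H.Adj m y ∧
      m ∉ (earPrefix D.ear i).verts ∧ y ∈ (earPrefix D.ear i).verts ∧ y ≠ x := by
    obtain ⟨m, h₁, h₂, hm⟩ := D.exists_adj_adj_of_length_eq_two hi hi2
    obtain ⟨hs, ht⟩ := D.ends_mem i hi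
    rcases hxy with ⟨rfl, rfl⟩ | ⟨rfl, rfl⟩
    exacts [⟨m, h₁, h₂, hm, ht, (D.ends_ne i hi).symm⟩,
      ⟨m, h₂.symm, h₁.symm, hm, hs, D.ends_ne i hi⟩]
  obtain ⟨z, W, hW, hzB, hzx, hWB, hWi⟩ :=
    D.exists_isPath_to_earPrefix (c := j + 1) (by omega) i x hy hyx
  have hQ : (Walk.cons hxm (Walk.cons hmy W)).IsEarOn (earPrefix D.ear (j + 1)).verts := by
    refine Walk.isEarOn_cons hxm (hW.cons fun h => hm (hWi m h))
      ((mem_earPrefix_verts_iff D.ear).2 ⟨j, by omega, hx⟩) hzB hzx.symm fun u hu huB => ?_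
    rcases List.mem_cons.1 (Walk.support_cons _ _ ▸ hu) with rfl | hu
    · exact absurd (earPrefix_verts_mono D.ear hji huB) hm
    · exact hWB u hu huB
  have hQ₂ : 2 ≤ (Walk.cons hxm (Walk.cons hmy W)).length := by simp
  rcases Nat.eq_zero_or_pos (j : ℕ) with hj | hj
  · obtain rfl : j = 0 := Fin.ext hj
    exact absurd (by simpa using hQ) (hD.not_isEarOn_of_length_eq_three hj3 hQ₂)
  obtain ⟨hlen, hz, hnadj⟩ := hD.eq_and_not_adj_of_length_eq_three hj hj3 hx hxs hxt hQ hQ₂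
  obtain rfl : y = z := Walk.eq_of_length_eq_zero (by simpa using hlen)
  exact ⟨hz, hnadj⟩

/-- In a greedy open ear decomposition of a minimally 2-connected graph, if an
ear `P_i` with exactly two edges has an endpoint `x` that is an internal vertex
of an earlier ear `P_j` with exactly three edges, then the other endpoint `y`
of `P_i` is an endpoint of `P_j` that is not adjacent to `x` in the graph
`H_j = P₁ ∪ ⋯ ∪ P_j`. -/
theorem greedy_two_ear_on_three_ear {V : Type*}
    (H : SimpleGraph V) (hmin : MinimallyTwoConnected H) {h : ℕ}
    (D : OpenEarDecomp H h) (hD : D.Greedy)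
    (i j : Fin (h + 1)) (hji : (j : ℕ) < (i : ℕ))
    (hi2 : (D.ear i).length = 2) (hj3 : (D.ear j).length = 3)
    (x y : V)
    (hxy : (x = D.s i ∧ y = D.t i) ∨ (x = D.t i ∧ y = D.s i))
    (hxint : x ∈ (D.ear j).support ∧ x ≠ D.s j ∧ x ≠ D.t j) :
    (y = D.s j ∨ y = D.t j) ∧
      ¬ (earPrefix D.ear ((j : ℕ) + 1)).Adj x y :=
  greedy_two_ear_on_three_ear_general H D hD i j hji hi2 hj3 x y hxy hxint
end
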